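/- For two independent predictors with symmetric noise rates R1, R2 ∈ [0,1) on a c-class problem (c ≥ 2), the conditional probability that the common label is wrong given that the two predictions agree equals (R1·R2/(c-1)) / ((1-R1)(1-R2) + R1·R2/(c-1)). -/

import Mathlib

open Finset

section SymmetricNoise

variable {α K : Type*} [Fintype α] [DecidableEq α] [Field K]
  {y : α} {p₁ p₂ : α → K} {q₁ q₂ r₁ r₂ : K}

theorem sum_filter_ne_mul_of_eq_ite
    (hp₁ : ∀ z, p₁ z = if z = y then q₁ else r₁) (hp₂ : ∀ z, p₂ z = if z = y then q₂ else r₂) :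
    ∑ z ∈ univ.filter (· ≠ y), p₁ z * p₂ z = ((Fintype.card α : K) - 1) * (r₁ * r₂) := by
  rw [filter_ne', sum_congr rfl fun z hz => by rw [hp₁, hp₂, if_neg (ne_of_mem_erase hz),
    if_neg (ne_of_mem_erase hz)], sum_const, nsmul_eq_mul, cast_card_erase_of_mem (mem_univ y),
    card_univ]

theorem sum_mul_of_eq_ite
    (hp₁ : ∀ z, p₁ z = if z = y then q₁ else r₁) (hp₂ : ∀ z, p₂ z = if z = y then q₂ else r₂) :
    ∑ z, p₁ z * p₂ z = q₁ * q₂ + ∑ z ∈ univ.filter (· ≠ y), p₁ z * p₂ z := by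
  rw [← add_sum_erase univ _ (mem_univ y), filter_ne', hp₁, hp₂, if_pos rfl, if_pos rfl]

end SymmetricNoise

theorem mul_div_mul_div_self {K : Type*} [Field K] (x a b : K) : x * (a / x * (b / x)) = a * b / x := by
  rcases eq_or_ne x 0 with rfl | hx
  · simp
  · field_simp

theorem lcc_conditional_noise_rate_general
    (c : ℕ) (R1 R2 : ℝ)
    (y : Fin c)
    (p1 p2 : Fin c → ℝ)
    (hp1 : ∀ z, p1 z = if z = y then 1 - R1 else R1 / ((c : ℝ) - 1))
    (hp2 : ∀ z, p2 z = if z = y then 1 - R2 else R2 / ((c : ℝ) - 1)) :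
    (∑ z ∈ Finset.univ.filter (fun z => z ≠ y), p1 z * p2 z)
        / (∑ z, p1 z * p2 z)
      = (R1 * R2 / ((c : ℝ) - 1))
          / ((1 - R1) * (1 - R2) + R1 * R2 / ((c : ℝ) - 1)) := by
  have hwrong : ∑ z ∈ univ.filter (· ≠ y), p1 z * p2 z = R1 * R2 / ((c : ℝ) - 1) := by
    rw [sum_filter_ne_mul_of_eq_ite hp1 hp2, Fintype.card_fin, mul_div_mul_div_self]
  rw [sum_mul_of_eq_ite hp1 hp2, hwrong]

/-- For two independent predictors with symmetric noise rates `R1, R2 ∈ [0,1)`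
on a `c`-class problem (`c ≥ 2`), the conditional probability that the common
label is wrong given that the two predictions agree equals
`(R1*R2/(c-1)) / ((1-R1)*(1-R2) + R1*R2/(c-1))`. -/
theorem lcc_conditional_noise_rate
    (c : ℕ) (hc : 2 ≤ c) (R1 R2 : ℝ)
    (hR1 : 0 ≤ R1) (hR1' : R1 < 1) (hR2 : 0 ≤ R2) (hR2' : R2 < 1)
    (y : Fin c)
    (p1 p2 : Fin c → ℝ)
    (hp1 : ∀ z, p1 z = if z = y then 1 - R1 else R1 / ((c : ℝ) - 1))
    (hp2 : ∀ z, p2 z = if z = y then 1 - R2 else R2 / ((c : ℝ) - 1)) :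
    (∑ z ∈ Finset.univ.filter (fun z => z ≠ y), p1 z * p2 z)
        / (∑ z, p1 z * p2 z)
      = (R1 * R2 / ((c : ℝ) - 1))
          / ((1 - R1) * (1 - R2) + R1 * R2 / ((c : ℝ) - 1)) :=
  lcc_conditional_noise_rate_general c R1 R2 y p1 p2 hp1 hp2
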